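/- Let y₁,…,y_N, x̃₁,…,x̃_N ∈ ℝ³ with Σᵢ mᵢ x̃ᵢ = 0, mᵢ, kᵢ > 0, M = Σᵢ mᵢ, μ > 0, and J = −Σᵢ mᵢ (x̃ᵢ)̂². Suppose (p, R, v, ω) : ℝ → ℝ³ × ℝ^{3×3} × ℝ³ × ℝ³ is differentiable, satisfies R(t) ∈ SO(3) for all t, and solves ṗ = v, Ṙ = R ω̂, M v̇ = Σᵢ kᵢ(yᵢ − R x̃ᵢ − p) − μ M v, J ω̇ = Σᵢ (kᵢ x̃ᵢ × (Rᵀ(yᵢ − p)) − μ mᵢ x̃ᵢ × (ω × x̃ᵢ)) − ω × J ω. Then the total energy t ↦ V(t) = (M/2)‖v(t)‖² + (1/2)⟨ω(t), J ω(t)⟩ + Σᵢ (kᵢ/2)‖yᵢ − R(t) x̃ᵢ − p(t)‖² is differentiable with derivative V̇(t) = −μ M ‖v(t)‖² − μ ⟨ω(t), J ω(t)⟩ ≤ 0; in particular V is nonincreasing. -/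

import Mathlib

open Matrix Filter
open scoped RealInnerProductSpace

noncomputable section

/-- Vectors in ℝ³ with the Euclidean norm. -/
abbrev V3 : Type := EuclideanSpace ℝ (Fin 3)

/-- The cross product on ℝ³. -/
def cross3 (a b : V3) : V3 :=
  WithLp.toLp 2 ![a 1 * b 2 - a 2 * b 1, a 2 * b 0 - a 0 * b 2, a 0 * b 1 - a 1 * b 0]

/-- The skew-symmetric matrix `â` of a vector, satisfying `â b = a × b`. -/
def hat (a : V3) : Matrix (Fin 3) (Fin 3) ℝ :=
  !![0, -(a 2), a 1; a 2, 0, -(a 0); -(a 1), a 0, 0]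

/-- Action of a 3×3 matrix on a vector in ℝ³. -/
def act (R : Matrix (Fin 3) (Fin 3) ℝ) (v : V3) : V3 := WithLp.toLp 2 (R.mulVec v)

/-- Membership in SO(3). -/
def isSO3 (R : Matrix (Fin 3) (Fin 3) ℝ) : Prop := Rᵀ * R = 1 ∧ R.det = 1

attribute [local instance] Matrix.normedAddCommGroup Matrix.normedSpace

/-!
Write `qᵢ = yᵢ - R x̃ᵢ - p` for the spring displacements, so that `q̇ᵢ = -(R (ω × x̃ᵢ) + v)`.
Pairing the translational equation with `v` shows that the spring forces deliver the power
`∑ kᵢ ⟪qᵢ, v⟫`; pairing the rotational equation with `ω` shows that their torques deliver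
`∑ kᵢ ⟪qᵢ, R (ω × x̃ᵢ)⟫`, because `R` is orthogonal and `⟪x̃ᵢ, ω × x̃ᵢ⟫ = 0`, while the
gyroscopic term `⟪ω, ω × Jω⟫` vanishes. Together this is exactly the rate at which the spring
potential decreases, so only the damping `-μM‖v‖² - μ⟪ω, Jω⟫` survives, and it is nonpositive
since `⟪ω, Jω⟫ = ∑ mᵢ ‖ω × x̃ᵢ‖²`.
-/

lemma inner_eq_dotProduct (a b : V3) : ⟪a, b⟫ = WithLp.ofLp a ⬝ᵥ WithLp.ofLp b := by
  rw [EuclideanSpace.inner_eq_star_dotProduct, star_trivial, dotProduct_comm]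

lemma ofLp_cross3 (a b : V3) :
    WithLp.ofLp (cross3 a b) = WithLp.ofLp a ⨯₃ WithLp.ofLp b :=
  (cross_apply _ _).symm

lemma neg_cross3 (a b : V3) : -cross3 a b = cross3 b a :=
  WithLp.ofLp_injective 2 <| by simp only [WithLp.ofLp_neg, ofLp_cross3, cross_anticomm]

lemma cross3_neg (a b : V3) : cross3 a (-b) = -cross3 a b :=
  WithLp.ofLp_injective 2 <| by simp only [WithLp.ofLp_neg, ofLp_cross3, map_neg]

lemma inner_cross3_self_left (a b : V3) : ⟪a, cross3 a b⟫ = 0 := by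
  rw [inner_eq_dotProduct, ofLp_cross3, dot_self_cross]

lemma inner_cross3_self_right (a b : V3) : ⟪b, cross3 a b⟫ = 0 := by
  rw [inner_eq_dotProduct, ofLp_cross3, dot_cross_self]

lemma inner_cross3_right (a b c : V3) : ⟪a, cross3 b c⟫ = ⟪cross3 a b, c⟫ := by
  rw [inner_eq_dotProduct, inner_eq_dotProduct, ofLp_cross3, ofLp_cross3,
    dotProduct_comm _ (WithLp.ofLp c), triple_product_permutation (WithLp.ofLp c)]

lemma act_eq_toLpLin (A : Matrix (Fin 3) (Fin 3) ℝ) (b : V3) :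
    act A b = Matrix.toLpLin 2 2 A b := rfl

lemma act_hat (a b : V3) : act (hat a) b = cross3 a b := by
  ext i; fin_cases i <;> simp [act, cross3, hat, dotProduct, Fin.sum_univ_three] <;> ring

lemma act_mul (A B : Matrix (Fin 3) (Fin 3) ℝ) (c : V3) :
    act (A * B) c = act A (act B c) := by
  simp only [act_eq_toLpLin, Matrix.toLpLin_mul_same, LinearMap.comp_apply]

lemma inner_act_right (A : Matrix (Fin 3) (Fin 3) ℝ) (a b : V3) :
    ⟪a, act A b⟫ = ⟪act Aᵀ a, b⟫ := by
  simp only [inner_eq_dotProduct, act, dotProduct_mulVec, mulVec_transpose, dotProduct_comm]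

lemma hat_transpose (a : V3) : (hat a)ᵀ = -hat a := by
  ext i j; fin_cases i <;> fin_cases j <;> simp [hat]

theorem HasDerivAt.act_left {R : ℝ → Matrix (Fin 3) (Fin 3) ℝ} {R' : Matrix (Fin 3) (Fin 3) ℝ}
    {t : ℝ} (hR : HasDerivAt R R' t) (c : V3) :
    HasDerivAt (fun s => act (R s) c) (act R' c) t := by
  exact (LinearMap.toContinuousLinearMap
    ((LinearMap.applyₗ c).comp (Matrix.toLpLin 2 2).toLinearMap)).hasFDerivAt.comp_hasDerivAt t hR

theorem HasDerivAt.act_right (A : Matrix (Fin 3) (Fin 3) ℝ) {w : ℝ → V3} {w' : V3}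
    {t : ℝ} (hw : HasDerivAt w w' t) :
    HasDerivAt (fun s => act A (w s)) (act A w') t := by
  exact (LinearMap.toContinuousLinearMap (Matrix.toLpLin 2 2 A)).hasFDerivAt.comp_hasDerivAt t hw

section Inertia

variable {ι : Type*} [Fintype ι] (m : ι → ℝ) (x : ι → V3)

def inertiaMatrix : Matrix (Fin 3) (Fin 3) ℝ := -∑ i, m i • (hat (x i) * hat (x i))

lemma inertiaMatrix_transpose : (inertiaMatrix m x)ᵀ = inertiaMatrix m x := by
  simp [inertiaMatrix, transpose_sum, transpose_mul, hat_transpose]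

lemma act_inertiaMatrix (w : V3) :
    act (inertiaMatrix m x) w = ∑ i, m i • cross3 (x i) (cross3 w (x i)) := by
  simp only [inertiaMatrix, act_eq_toLpLin, map_neg, map_sum, map_smul,
    LinearMap.neg_apply, LinearMap.sum_apply, LinearMap.smul_apply,
    ← Finset.sum_neg_distrib, ← smul_neg]
  refine Finset.sum_congr rfl fun i _ => ?_
  rw [← act_eq_toLpLin, act_mul, act_hat, act_hat, ← neg_cross3 (x i) w, cross3_neg]

lemma inner_act_inertiaMatrix (w : V3) :
    ⟪w, act (inertiaMatrix m x) w⟫ = ∑ i, m i * ‖cross3 w (x i)‖ ^ 2 := by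
  simp only [act_inertiaMatrix, inner_sum, real_inner_smul_right, inner_cross3_right,
    real_inner_self_eq_norm_sq]

lemma inner_act_inertiaMatrix_nonneg {m : ι → ℝ} (hm : ∀ i, 0 ≤ m i) (w : V3) :
    0 ≤ ⟪w, act (inertiaMatrix m x) w⟫ := by
  rw [inner_act_inertiaMatrix]
  exact Finset.sum_nonneg fun i _ => mul_nonneg (hm i) (sq_nonneg _)

end Inertia

lemma inner_act_act_of_transpose_mul_self (R : Matrix (Fin 3) (Fin 3) ℝ) (hR : Rᵀ * R = 1)
    (a b : V3) : ⟪act R a, act R b⟫ = ⟪a, b⟫ := by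
  rw [inner_act_right, ← act_mul, hR]
  simp [act]

lemma inner_cross3_act_transpose (R : Matrix (Fin 3) (Fin 3) ℝ) (hR : Rᵀ * R = 1)
    (w x b : V3) : ⟪w, cross3 x (act Rᵀ b)⟫ = ⟪b - act R x, act R (cross3 w x)⟫ := by
  rw [inner_sub_left, inner_act_act_of_transpose_mul_self R hR, inner_cross3_self_right,
    sub_zero, inner_act_right, inner_cross3_right, real_inner_comm]

theorem HasDerivAt.inner_act_self {J : Matrix (Fin 3) (Fin 3) ℝ} (hJ : Jᵀ = J)
    {w : ℝ → V3} {w' : V3} {t : ℝ} (hw : HasDerivAt w w' t) :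
    HasDerivAt (fun s => ⟪w s, act J (w s)⟫) (2 * ⟪w t, act J w'⟫) t := by
  refine (hw.inner ℝ (hw.act_right J)).congr_deriv ?_
  rw [two_mul, inner_act_right J w', hJ, real_inner_comm]

lemma hasDerivAt_spring_displacement {p : ℝ → V3} {R : ℝ → Matrix (Fin 3) (Fin 3) ℝ}
    {t : ℝ} {v w : V3} (hp : HasDerivAt p v t) (hR : HasDerivAt R (R t * hat w) t) (x y : V3) :
    HasDerivAt (fun s => y - act (R s) x - p s) (-(act (R t) (cross3 w x) + v)) t := by
  refine (((hasDerivAt_const t y).sub (hR.act_left x)).sub hp).congr_deriv ?_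
  rw [act_mul, act_hat]
  abel

theorem hasDerivAt_rigid_body_energy {ι : Type*} [Fintype ι] (k : ι → ℝ) (y x : ι → V3)
    (M : ℝ) {J : Matrix (Fin 3) (Fin 3) ℝ} (hJ : Jᵀ = J) {p v ω : ℝ → V3}
    {R : ℝ → Matrix (Fin 3) (Fin 3) ℝ} {t : ℝ} {v' ω' : V3} (hp : HasDerivAt p (v t) t)
    (hR : HasDerivAt R (R t * hat (ω t)) t) (hv : HasDerivAt v v' t) (hω : HasDerivAt ω ω' t) :
    HasDerivAt (fun s => (M / 2) * ‖v s‖ ^ 2 + (1 / 2) * ⟪ω s, act J (ω s)⟫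
        + ∑ i, (k i / 2) * ‖y i - act (R s) (x i) - p s‖ ^ 2)
      (M * ⟪v t, v'⟫ + ⟪ω t, act J ω'⟫
        - ∑ i, k i * ⟪y i - act (R t) (x i) - p t, act (R t) (cross3 (ω t) (x i)) + v t⟫) t := by
  have hspring := HasDerivAt.fun_sum (u := Finset.univ) fun i _ =>
    ((hasDerivAt_spring_displacement hp hR (x i) (y i)).norm_sq).const_mul (k i / 2)
  refine ((((hv.norm_sq).const_mul (M / 2)).add
    ((hω.inner_act_self hJ).const_mul (1 / 2))).add hspring).congr_deriv ?_
  have half_mul_two_mul (a b : ℝ) : a / 2 * (2 * b) = a * b := by ring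
  simp only [inner_neg_right, mul_neg, Finset.sum_neg_distrib, half_mul_two_mul]
  ring

lemma translational_power_balance {E : Type*} [NormedAddCommGroup E] [InnerProductSpace ℝ E]
    {ι : Type*} [Fintype ι] (k : ι → ℝ) (q : ι → E) {M μ : ℝ} {v v' : E}
    (h : M • v' = ∑ i, k i • q i - (μ * M) • v) :
    M * ⟪v, v'⟫ = ∑ i, k i * ⟪q i, v⟫ - μ * M * ‖v‖ ^ 2 := by
  rw [← real_inner_smul_right, h, inner_sub_right, inner_sum, real_inner_smul_right,
    real_inner_self_eq_norm_sq]
  simp only [real_inner_smul_right, real_inner_comm (q _)]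

lemma rotational_power_balance {ι : Type*} [Fintype ι] (m k : ι → ℝ) (y x : ι → V3)
    {μ : ℝ} {R : Matrix (Fin 3) (Fin 3) ℝ} (hR : Rᵀ * R = 1) {p ω ω' : V3}
    (h : act (inertiaMatrix m x) ω' =
      (∑ i, (k i • cross3 (x i) (act Rᵀ (y i - p))
          - (μ * m i) • cross3 (x i) (cross3 ω (x i))))
        - cross3 ω (act (inertiaMatrix m x) ω)) :
    ⟪ω, act (inertiaMatrix m x) ω'⟫ =
      ∑ i, k i * ⟪y i - act R (x i) - p, act R (cross3 ω (x i))⟫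
        - μ * ⟪ω, act (inertiaMatrix m x) ω⟫ := by
  rw [h, inner_sub_right, inner_cross3_self_left, sub_zero, inner_sum]
  simp only [inner_sub_right, real_inner_smul_right, inner_cross3_act_transpose R hR,
    Finset.sum_sub_distrib, act_inertiaMatrix, inner_sum, Finset.mul_sum, mul_assoc,
    sub_right_comm _ p]

theorem energy_nonincreasing_along_solutions_general (N : ℕ) (m k : Fin N → ℝ)
    (hm : ∀ i, 0 < m i) (μ : ℝ) (hμ : 0 < μ)
    (y xt : Fin N → V3)
    (M : ℝ) (hM : M = ∑ i, m i)
    (J : Matrix (Fin 3) (Fin 3) ℝ) (hJ : J = -∑ i, m i • (hat (xt i) * hat (xt i)))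
    (p v ω v' ω' : ℝ → V3) (R : ℝ → Matrix (Fin 3) (Fin 3) ℝ)
    (hSO : ∀ t, isSO3 (R t))
    (hp : ∀ t, HasDerivAt p (v t) t)
    (hRd : ∀ t, HasDerivAt R (R t * hat (ω t)) t)
    (hv : ∀ t, HasDerivAt v (v' t) t)
    (hveq : ∀ t, M • v' t = ∑ i, k i • (y i - act (R t) (xt i) - p t) - (μ * M) • v t)
    (hw : ∀ t, HasDerivAt ω (ω' t) t)
    (hweq : ∀ t, act J (ω' t) =
      (∑ i, (k i • cross3 (xt i) (act (R t)ᵀ (y i - p t))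
          - (μ * m i) • cross3 (xt i) (cross3 (ω t) (xt i))))
        - cross3 (ω t) (act J (ω t)))
    (V : ℝ → ℝ)
    (hV : ∀ t, V t = (M / 2) * ‖v t‖ ^ 2 + (1 / 2) * ⟪ω t, act J (ω t)⟫
        + ∑ i, (k i / 2) * ‖y i - act (R t) (xt i) - p t‖ ^ 2) :
    (∀ t, HasDerivAt V (-(μ * M) * ‖v t‖ ^ 2 - μ * ⟪ω t, act J (ω t)⟫) t)
    ∧ (∀ t, -(μ * M) * ‖v t‖ ^ 2 - μ * ⟪ω t, act J (ω t)⟫ ≤ 0)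
    ∧ Antitone V := by
  change J = inertiaMatrix m xt at hJ
  subst hJ
  have hV' : V = _ := funext hV
  have hderiv (t : ℝ) :
      HasDerivAt V (-(μ * M) * ‖v t‖ ^ 2 - μ * ⟪ω t, act (inertiaMatrix m xt) (ω t)⟫) t := by
    refine hV' ▸ (hasDerivAt_rigid_body_energy k y xt M (inertiaMatrix_transpose m xt) (hp t)
      (hRd t) (hv t) (hw t)).congr_deriv ?_
    rw [translational_power_balance k _ (hveq t),
      rotational_power_balance m k y xt (hSO t).1 (hweq t)]
    simp only [inner_add_right, mul_add, Finset.sum_add_distrib]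
    ring
  have hdissipation (t : ℝ) :
      -(μ * M) * ‖v t‖ ^ 2 - μ * ⟪ω t, act (inertiaMatrix m xt) (ω t)⟫ ≤ 0 := by
    have hM_nonneg : 0 ≤ M := hM ▸ Finset.sum_nonneg fun i _ => (hm i).le
    have hJ_nonneg := inner_act_inertiaMatrix_nonneg xt (fun i => (hm i).le) (ω t)
    linarith [mul_nonneg (mul_nonneg hμ.le hM_nonneg) (sq_nonneg ‖v t‖),
      mul_nonneg hμ.le hJ_nonneg]
  exact ⟨hderiv, hdissipation, antitone_of_deriv_nonpos (fun t => (hderiv t).differentiableAt)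
    fun t => (hderiv t).deriv ▸ hdissipation t⟩

/-- along any solution of the registration dynamics evolving on SO(3),
the total energy is differentiable with derivative
`V̇ = −μM‖v‖² − μ⟪ω, Jω⟫ ≤ 0`; in particular `V` is nonincreasing. -/
theorem energy_nonincreasing_along_solutions (N : ℕ) (m k : Fin N → ℝ)
    (hm : ∀ i, 0 < m i) (hk : ∀ i, 0 < k i) (μ : ℝ) (hμ : 0 < μ)
    (y xt : Fin N → V3) (hcm : ∑ i, m i • xt i = 0)
    (M : ℝ) (hM : M = ∑ i, m i)
    (J : Matrix (Fin 3) (Fin 3) ℝ) (hJ : J = -∑ i, m i • (hat (xt i) * hat (xt i)))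
    (p v ω v' ω' : ℝ → V3) (R : ℝ → Matrix (Fin 3) (Fin 3) ℝ)
    (hSO : ∀ t, isSO3 (R t))
    (hp : ∀ t, HasDerivAt p (v t) t)
    (hRd : ∀ t, HasDerivAt R (R t * hat (ω t)) t)
    (hv : ∀ t, HasDerivAt v (v' t) t)
    (hveq : ∀ t, M • v' t = ∑ i, k i • (y i - act (R t) (xt i) - p t) - (μ * M) • v t)
    (hw : ∀ t, HasDerivAt ω (ω' t) t)
    (hweq : ∀ t, act J (ω' t) =
      (∑ i, (k i • cross3 (xt i) (act (R t)ᵀ (y i - p t))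
          - (μ * m i) • cross3 (xt i) (cross3 (ω t) (xt i))))
        - cross3 (ω t) (act J (ω t)))
    (V : ℝ → ℝ)
    (hV : ∀ t, V t = (M / 2) * ‖v t‖ ^ 2 + (1 / 2) * ⟪ω t, act J (ω t)⟫
        + ∑ i, (k i / 2) * ‖y i - act (R t) (xt i) - p t‖ ^ 2) :
    (∀ t, HasDerivAt V (-(μ * M) * ‖v t‖ ^ 2 - μ * ⟪ω t, act J (ω t)⟫) t)
    ∧ (∀ t, -(μ * M) * ‖v t‖ ^ 2 - μ * ⟪ω t, act J (ω t)⟫ ≤ 0)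
    ∧ Antitone V :=
  energy_nonincreasing_along_solutions_general N m k hm μ hμ y xt M hM J hJ p v ω v' ω' R hSO hp hRd
    hv hveq hw hweq V hV
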